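/- Under the hypotheses of the previous statement (h, V differentiable, α_x > α ≥ 0, λ ≥ α_x, C, ρ > 0, μ ≥ 0, δ₀ ≥ Cμ/(α_x ρ), h'(t) ≥ -α h(t) + δ₀ - (C/ρ)V(t), V ≥ 0, V'(t) ≤ -λ V(t) + μ), if additionally h(0) ≥ 0 and (α_x - α)h(0) + δ₀ - (C/ρ)V(0) ≥ 0, then h(t) ≥ 0 for all t ≥ 0. -/

import Mathlib

/-!
With `c = C/ρ`, the quantity `H = (αx - α) h + δ₀ - c V` satisfies `H' ≥ -α H` on `t ≥ 0`: the
excess is `αx δ₀ - c μ + c (λ - αx) V ≥ 0`. Since `H(0) ≥ 0`, the comparison lemma keeps `H ≥ 0`,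
and then `h' ≥ -α h + δ₀ - c V = -αx h + H ≥ -αx h`, so the comparison lemma again gives `h ≥ 0`.
-/

open Real Set

lemma nonneg_of_neg_mul_le_deriv {f : ℝ → ℝ} {k : ℝ} (hf : Differentiable ℝ f) (h0 : 0 ≤ f 0)
    (hd : ∀ t, 0 ≤ t → -k * f t ≤ deriv f t) : ∀ t, 0 ≤ t → 0 ≤ f t := by
  set g : ℝ → ℝ := fun t => exp (k * t) * f t
  have hg : ∀ t, HasDerivAt g (exp (k * t) * (deriv f t + k * f t)) t := fun t => by
    have hexp : HasDerivAt (fun t => exp (k * t)) (exp (k * t) * k) t := by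
      simpa using ((hasDerivAt_id t).const_mul k).exp
    exact (hexp.mul (hf t).hasDerivAt).congr_deriv (by ring)
  have hmono : MonotoneOn g (Ici 0) := by
    refine monotoneOn_of_hasDerivWithinAt_nonneg (convex_Ici 0)
      (fun t _ => (hg t).continuousAt.continuousWithinAt) (fun t _ => (hg t).hasDerivWithinAt)
      fun t ht => mul_nonneg (exp_pos _).le ?_
    rw [interior_Ici] at ht
    linarith [hd t (le_of_lt ht)]
  intro t ht
  have hgt : g 0 ≤ g t := hmono self_mem_Ici ht ht
  simp only [g, mul_zero, exp_zero, one_mul] at hgt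
  exact nonneg_of_mul_nonneg_right (h0.trans hgt) (exp_pos _)

/-- The predictive CBF `H` of the paper, with `c = C/ρ`. -/
def predictiveBarrier (h V : ℝ → ℝ) (α αx c δ₀ : ℝ) (t : ℝ) : ℝ :=
  (αx - α) * h t + δ₀ - c * V t

lemma hasDerivAt_predictiveBarrier {h V : ℝ → ℝ} (α αx c δ₀ : ℝ) (hh : Differentiable ℝ h)
    (hV : Differentiable ℝ V) (t : ℝ) :
    HasDerivAt (predictiveBarrier h V α αx c δ₀) ((αx - α) * deriv h t - c * deriv V t) t :=
  (((hh t).hasDerivAt.const_mul (αx - α)).add_const δ₀).sub ((hV t).hasDerivAt.const_mul c)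

lemma neg_mul_predictiveBarrier_le {h V : ℝ → ℝ} {α αx lam c mu δ₀ t : ℝ}
    (hαx : α ≤ αx) (hlam : αx ≤ lam) (hc : 0 ≤ c) (hδ₀ : c * mu ≤ αx * δ₀)
    (hht : -α * h t + δ₀ - c * V t ≤ deriv h t) (hVt : 0 ≤ V t)
    (hV't : deriv V t ≤ -lam * V t + mu) :
    -α * predictiveBarrier h V α αx c δ₀ t ≤ (αx - α) * deriv h t - c * deriv V t := by
  have hh' := mul_le_mul_of_nonneg_left hht (sub_nonneg.mpr hαx)
  have hV' := mul_le_mul_of_nonneg_left hV't hc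
  have hexcess : 0 ≤ c * (lam - αx) * V t := by
    have := sub_nonneg.mpr hlam
    positivity
  unfold predictiveBarrier
  linarith

theorem stmt_4_general (h V : ℝ → ℝ) (α αx lam C ρ mu δ₀ : ℝ)
    (hh : Differentiable ℝ h) (hV : Differentiable ℝ V)
    (hα : 0 ≤ α) (hαx : α < αx) (hlam : αx ≤ lam)
    (hC : 0 < C) (hρ : 0 < ρ)
    (hδ₀ : C * mu / (αx * ρ) ≤ δ₀)
    (hhineq : ∀ t : ℝ, 0 ≤ t → -α * h t + δ₀ - (C / ρ) * V t ≤ deriv h t)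
    (hVpos : ∀ t : ℝ, 0 ≤ t → 0 ≤ V t)
    (hVineq : ∀ t : ℝ, 0 ≤ t → deriv V t ≤ -lam * V t + mu)
    (hh0 : 0 ≤ h 0)
    (hH0 : 0 ≤ (αx - α) * h 0 + δ₀ - (C / ρ) * V 0) :
    ∀ t : ℝ, 0 ≤ t → 0 ≤ h t := by
  set H := predictiveBarrier h V α αx (C / ρ) δ₀
  have hαx₀ : 0 < αx := hα.trans_lt hαx
  have hCmu : C / ρ * mu ≤ αx * δ₀ := by
    rw [div_le_iff₀ (mul_pos hαx₀ hρ)] at hδ₀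
    rw [div_mul_eq_mul_div, div_le_iff₀ hρ]
    linarith
  have hHnonneg : ∀ t, 0 ≤ t → 0 ≤ H t := by
    refine nonneg_of_neg_mul_le_deriv (k := α)
      (fun t => (hasDerivAt_predictiveBarrier α αx _ δ₀ hh hV t).differentiableAt) hH0
      fun t ht => ?_
    rw [(hasDerivAt_predictiveBarrier α αx _ δ₀ hh hV t).deriv]
    exact neg_mul_predictiveBarrier_le hαx.le hlam (div_pos hC hρ).le hCmu (hhineq t ht)
      (hVpos t ht) (hVineq t ht)
  refine nonneg_of_neg_mul_le_deriv (k := αx) hh hh0 fun t ht => ?_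
  have hHt : 0 ≤ H t := hHnonneg t ht
  simp only [H, predictiveBarrier] at hHt
  linarith [hhineq t ht]

/-- Safety conclusion of Theorem 3 in scalar form: under the predictive CBF
hypotheses, if additionally `h(0) ≥ 0` and
`(α_x - α) h(0) + δ₀ - (C/ρ) V(0) ≥ 0`, then `h(t) ≥ 0` for all `t ≥ 0`. -/
theorem stmt_4 (h V : ℝ → ℝ) (α αx lam C ρ mu δ₀ : ℝ)
    (hh : Differentiable ℝ h) (hV : Differentiable ℝ V)
    (hα : 0 ≤ α) (hαx : α < αx) (hlam : αx ≤ lam)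
    (hC : 0 < C) (hρ : 0 < ρ) (hmu : 0 ≤ mu)
    (hδ₀ : C * mu / (αx * ρ) ≤ δ₀)
    (hhineq : ∀ t : ℝ, 0 ≤ t → -α * h t + δ₀ - (C / ρ) * V t ≤ deriv h t)
    (hVpos : ∀ t : ℝ, 0 ≤ t → 0 ≤ V t)
    (hVineq : ∀ t : ℝ, 0 ≤ t → deriv V t ≤ -lam * V t + mu)
    (hh0 : 0 ≤ h 0)
    (hH0 : 0 ≤ (αx - α) * h 0 + δ₀ - (C / ρ) * V 0) :
    ∀ t : ℝ, 0 ≤ t → 0 ≤ h t :=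
  stmt_4_general h V α αx lam C ρ mu δ₀ hh hV hα hαx hlam hC hρ hδ₀ hhineq hVpos hVineq hh0 hH0
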